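/- Let (G,𝒳,k) be a Yes-instance of EDP where G is a split graph with split partition (C, I), let 𝒫 be a minimum solution of (G,𝒳,k), let P ∈ 𝒫, and let v_1,…,v_ℓ be the vertices of V(P) ∩ C listed in the order in which they occur along P. Then for all i, j ∈ {1,…,ℓ} with j ≥ i+2, the edge v_i v_j of G is used by some path in 𝒫 \ {P}. -/

import Mathlib

open SimpleGraph Finset

/-- A family of walks in `G` connecting the terminal pairs `X`. -/
abbrev WalkFamily {V : Type*} (G : SimpleGraph V) {ι : Type*} (X : ι → V × V) :=
  ∀ i : ι, G.Walk (X i).1 (X i).2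

/-- The walks in the family are pairwise edge-disjoint. -/
def PairwiseEdgeDisjoint {V : Type*} (G : SimpleGraph V) {ι : Type*} (X : ι → V × V)
    (P : WalkFamily G X) : Prop :=
  ∀ i j : ι, i ≠ j → ∀ e : Sym2 V, e ∈ (P i).edges → e ∉ (P j).edges

/-- A solution of the Edge-Disjoint Paths (EDP) instance `(G, X)`: a family of paths
connecting the terminal pairs that are pairwise edge-disjoint. -/
def IsEDPSolution {V : Type*} (G : SimpleGraph V) {ι : Type*} (X : ι → V × V)
    (P : WalkFamily G X) : Prop :=
  (∀ i, (P i).IsPath) ∧ PairwiseEdgeDisjoint G X P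

/-- `(G, X)` is a Yes-instance of EDP. -/
def EDPYes {V : Type*} (G : SimpleGraph V) {ι : Type*} (X : ι → V × V) : Prop :=
  ∃ P : WalkFamily G X, IsEDPSolution G X P

/-- A minimum solution of the EDP instance `(G, X)`: a solution minimizing the total
number of edges of the paths. -/
def IsMinEDPSolution {V : Type*} (G : SimpleGraph V) {ι : Type*} [Fintype ι]
    (X : ι → V × V) (P : WalkFamily G X) : Prop :=
  IsEDPSolution G X P ∧
    ∀ Q : WalkFamily G X, IsEDPSolution G X Q →
      ∑ i, (P i).length ≤ ∑ i, (Q i).length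

/-- `(C, I)` is a split partition of `G`: `V(G)` is the disjoint union of `C` and `I`,
`C` induces a clique, and `I` is an independent set. -/
def IsSplitPartition {V : Type*} (G : SimpleGraph V) (C I : Finset V) : Prop :=
  (∀ x : V, x ∈ C ∨ x ∈ I) ∧ (∀ x : V, ¬ (x ∈ C ∧ x ∈ I)) ∧
  (∀ x ∈ C, ∀ y ∈ C, x ≠ y → G.Adj x y) ∧ (∀ x ∈ I, ∀ y ∈ I, ¬ G.Adj x y)

/-
A path of a minimum solution visits a clique vertex strictly between `L[a]` and `L[b]`, so these
two vertices are at least two steps apart along it. Replacing that segment by the clique edge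
`L[a] L[b]` gives a strictly shorter path using only edges of the old path and `L[a] L[b]`; if no
other path used `L[a] L[b]`, swapping it in would give a solution of smaller total length.
-/

theorem List.Sublist.exists_getElem?_eq_of_add_le {α : Type*} {l l' : List α} (h : l.Sublist l')
    {a b n : ℕ} (hab : a + n ≤ b) (hb : b < l.length) :
    ∃ i j, i + n ≤ j ∧ l'[i]? = some (l[a]'(by omega)) ∧ l'[j]? = some l[b] := by
  obtain ⟨f, hf⟩ := List.sublist_iff_exists_orderEmbedding_getElem?_eq.mp h
  refine ⟨f a, f b, ?_, by rw [← hf, List.getElem?_eq_getElem],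
    by rw [← hf, List.getElem?_eq_getElem]⟩
  have := (f.strictMono.comp (strictMono_id.add_const a)).add_le_nat (b - a) 0
  simp only [Function.comp_apply, id, zero_add, add_zero] at this
  rw [Nat.sub_add_cancel (by omega)] at this
  omega

namespace SimpleGraph.Walk

variable {V : Type*} {G : SimpleGraph V} {u v : V}

def shortcut (w : G.Walk u v) (i j : ℕ) (h : G.Adj (w.getVert i) (w.getVert j)) :
    G.Walk u v :=
  (w.take i).append (cons h (w.drop j))

variable {i j : ℕ}

theorem IsPath.shortcut {w : G.Walk u v} (hw : w.IsPath) (h : G.Adj (w.getVert i) (w.getVert j))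
    (hij : i < j) : (w.shortcut i j h).IsPath := by
  have hi : i < w.length := by
    by_contra! hi
    exact h.ne (by rw [w.getVert_of_length_le hi, w.getVert_of_length_le (by omega)])
  rw [isPath_def, Walk.shortcut, support_append, support_cons, List.tail_cons, support_take,
    drop_support_eq_support_drop_min]
  refine hw.support_nodup.sublist ?_
  conv_rhs => rw [← w.support.take_append_drop (j ⊓ w.length)]
  exact (List.take_sublist_take_left (le_min hij hi)).append_right _

variable (w : G.Walk u v) (h : G.Adj (w.getVert i) (w.getVert j))

theorem length_shortcut_lt (hij : i + 2 ≤ j) (hj : j ≤ w.length) :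
    (w.shortcut i j h).length < w.length := by
  simp only [shortcut, length_append, take_length, length_cons, drop_length]
  omega

theorem edges_shortcut_subset :
    (w.shortcut i j h).edges ⊆ s(w.getVert i, w.getVert j) :: w.edges := by
  intro e he
  simp only [shortcut, edges_append, edges_cons, edges_take, edges_drop, List.mem_append,
    List.mem_cons] at he ⊢
  rcases he with he | he | he
  exacts [.inr (List.mem_of_mem_take he), .inl he, .inr (List.mem_of_mem_drop he)]

end SimpleGraph.Walk

section EDP

variable {V : Type*} {G : SimpleGraph V} {ι : Type*} [DecidableEq ι] {X : ι → V × V}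
  {P : WalkFamily G X} {i : ι} {e : Sym2 V}

theorem IsEDPSolution.update (hP : IsEDPSolution G X P) {Q : G.Walk (X i).1 (X i).2}
    (hQ : Q.IsPath) (hQe : ∀ e ∈ Q.edges, e ∈ (P i).edges ∨ ∀ j ≠ i, e ∉ (P j).edges) :
    IsEDPSolution G X (Function.update P i Q) := by
  refine ⟨fun j => ?_, fun j₁ j₂ hne e he₁ he₂ => ?_⟩
  · rcases eq_or_ne j i with rfl | hj
    · simpa using hQ
    · simpa [hj] using hP.1 j
  · rcases eq_or_ne j₁ i with rfl | h₁
    · rw [Function.update_self] at he₁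
      rw [Function.update_of_ne hne.symm] at he₂
      rcases hQe e he₁ with h | h
      exacts [hP.2 _ _ hne e h he₂, h j₂ hne.symm he₂]
    · rw [Function.update_of_ne h₁] at he₁
      rcases eq_or_ne j₂ i with rfl | h₂
      · rw [Function.update_self] at he₂
        rcases hQe e he₂ with h | h
        exacts [hP.2 _ _ hne e he₁ h, h j₁ h₁ he₁]
      · rw [Function.update_of_ne h₂] at he₂
        exact hP.2 _ _ hne e he₁ he₂

theorem IsMinEDPSolution.length_le_of_update [Fintype ι] (hP : IsMinEDPSolution G X P)
    {Q : G.Walk (X i).1 (X i).2} (hQ : IsEDPSolution G X (Function.update P i Q)) :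
    (P i).length ≤ Q.length := by
  have hsum := hP.2 _ hQ
  simp only [Function.apply_update (fun _ q => Walk.length q) P i Q] at hsum
  rw [Finset.sum_update_of_mem (mem_univ i),
    Finset.sum_eq_add_sum_sdiff_singleton_of_mem (mem_univ i)] at hsum
  omega

theorem IsMinEDPSolution.exists_ne_mem_edges [Fintype ι] (hP : IsMinEDPSolution G X P)
    {Q : G.Walk (X i).1 (X i).2} (hQ : Q.IsPath) (hlt : Q.length < (P i).length)
    (hQe : Q.edges ⊆ e :: (P i).edges) : ∃ j ≠ i, e ∈ (P j).edges := by
  by_contra! he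
  refine hlt.not_ge (hP.length_le_of_update (hP.1.update hQ fun e' he' => ?_))
  rcases List.mem_cons.mp (hQe he') with rfl | h
  exacts [.inr he, .inl h]

end EDP

/-- Let `P i₀` be a path of a minimum EDP solution on a split graph and let
`L` be the list of clique vertices of `P i₀` in the order in which they occur along it.
Then every "shortcut" edge `L[a] L[b]` with `b ≥ a + 2` is used by some other path of the
solution. -/
theorem min_edp_solution_shortcut_used {V : Type*} [DecidableEq V]
    (G : SimpleGraph V)
    (C I : Finset V) (hsplit : IsSplitPartition G C I)
    {k : ℕ} (X : Fin k → V × V)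
    (P : WalkFamily G X) (hP : IsMinEDPSolution G X P)
    (i₀ : Fin k)
    (L : List V) (hL : L = (P i₀).support.filter (fun y => decide (y ∈ C)))
    (a b : ℕ) (hab : a + 2 ≤ b) (hb : b < L.length) :
    ∃ j : Fin k, j ≠ i₀ ∧
      Sym2.mk (L[a]'(by omega)) (L[b]'hb) ∈ (P j).edges := by
  set w := P i₀
  have hsub : L.Sublist w.support := hL ▸ List.filter_sublist
  obtain ⟨i, j, hij, hi, hj⟩ := hsub.exists_getElem?_eq_of_add_le hab hb
  have hjlen : j ≤ w.length := by
    have := (List.getElem?_eq_some_iff.mp hj).1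
    rw [Walk.length_support] at this
    omega
  have hvi : w.getVert i = L[a] := by
    rw [← Option.some_inj, w.getVert_eq_support_getElem? (by omega), hi]
  have hvj : w.getVert j = L[b] := by
    rw [← Option.some_inj, w.getVert_eq_support_getElem? hjlen, hj]
  have hmemC : ∀ x ∈ L, x ∈ C := fun x hx => by
    rw [hL, List.mem_filter, decide_eq_true_iff] at hx
    exact hx.2
  have hne : L[a] ≠ L[b] := by
    have hnd : L.Nodup := hL ▸ (hP.1.1 i₀).support_nodup.filter _
    exact fun h => by have := hnd.getElem_inj_iff.mp h; omega
  have hadj : G.Adj (w.getVert i) (w.getVert j) := by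
    rw [hvi, hvj]
    exact hsplit.2.2.1 _ (hmemC _ (L.getElem_mem _)) _ (hmemC _ (L.getElem_mem _)) hne
  rw [← hvi, ← hvj]
  exact hP.exists_ne_mem_edges ((hP.1.1 i₀).shortcut hadj (by omega))
    (w.length_shortcut_lt hadj hij hjlen) (w.edges_shortcut_subset hadj)
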